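/- Let X ⊆ ℝ^d be nonempty, closed, convex, let f be convex and differentiable with u ∈ X, and let y = Π_X(x − η∇f(x)) for some x ∈ ℝ^d and η > 0. Then f(x) − f(u) ≤ (η/2)‖∇f(x)‖² + (1/(2η))‖x − u‖² − (1/(2η))‖y − u‖². -/

import Mathlib

/-! The first-order convexity inequality gives `f x - f u ≤ ⟪∇f x, x - u⟫`, and the projection
onto a convex set is non-expansive towards its points, so `‖y - u‖² ≤ ‖x - η∇f x - u‖²`.
Expanding the right-hand side produces exactly `2η⟪∇f x, x - u⟫` plus the two other terms. -/

open InnerProductSpace Set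

/-- Restricting `f` to the segment from `x` to `u` gives a convex function of one variable, whose
derivative at `0` is at most its slope between `0` and `1`. -/
theorem ConvexOn.apply_sub_le_of_hasFDerivAt {E : Type*} [NormedAddCommGroup E] [NormedSpace ℝ E]
    {s : Set E} {f : E → ℝ} {f' : E →L[ℝ] ℝ} {x u : E} (hf : ConvexOn ℝ s f) (hx : x ∈ s)
    (hu : u ∈ s) (hf' : HasFDerivAt f f' x) : f' (u - x) ≤ f u - f x := by
  let φ := f ∘ AffineMap.lineMap (k := ℝ) x u
  have hφ : ConvexOn ℝ (AffineMap.lineMap x u ⁻¹' s) φ := hf.comp_affineMap _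
  have hφ' : HasDerivAt φ (f' (u - x)) 0 := by
    have hline := AffineMap.hasDerivAt_lineMap (a := x) (b := u) (x := (0 : ℝ))
    rw [← AffineMap.lineMap_apply_zero (k := ℝ) x u] at hf'
    exact hf'.comp_hasDerivAt 0 hline
  have := hφ.le_slope_of_hasDerivAt (x := 0) (y := 1) (by simpa using hx) (by simpa using hu)
    zero_lt_one hφ'
  simpa [φ, slope_def_field] using this

theorem ConvexOn.inner_gradient_le {E : Type*} [NormedAddCommGroup E] [InnerProductSpace ℝ E]
    [CompleteSpace E] {s : Set E} {f : E → ℝ} {x u : E} (hf : ConvexOn ℝ s f) (hx : x ∈ s)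
    (hu : u ∈ s) (hfx : DifferentiableAt ℝ f x) : ⟪gradient f x, u - x⟫_ℝ ≤ f u - f x := by
  simpa using hf.apply_sub_le_of_hasFDerivAt hx hu hfx.hasGradientAt.hasFDerivAt

theorem Convex.inner_sub_le_zero_of_forall_dist_le {F : Type*} [NormedAddCommGroup F]
    [InnerProductSpace ℝ F] {K : Set F} (hK : Convex ℝ K) {y z u : F} (hy : y ∈ K) (hu : u ∈ K)
    (hmin : ∀ w ∈ K, dist y z ≤ dist w z) : ⟪z - y, u - y⟫_ℝ ≤ 0 := by
  have : Nonempty K := ⟨⟨y, hy⟩⟩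
  refine (norm_eq_iInf_iff_real_inner_le_zero hK hy).mp ?_ u hu
  have hbdd : BddBelow (range fun w : K => ‖z - w‖) := ⟨0, by rintro _ ⟨w, rfl⟩; positivity⟩
  refine le_antisymm (le_ciInf fun w => ?_) (ciInf_le hbdd ⟨y, hy⟩)
  simpa [dist_eq_norm, norm_sub_rev] using hmin w w.2

theorem Convex.norm_sub_le_of_forall_dist_le {F : Type*} [NormedAddCommGroup F]
    [InnerProductSpace ℝ F] {K : Set F} (hK : Convex ℝ K) {y z u : F} (hy : y ∈ K) (hu : u ∈ K)
    (hmin : ∀ w ∈ K, dist y z ≤ dist w z) : ‖y - u‖ ≤ ‖z - u‖ := by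
  have hobtuse := hK.inner_sub_le_zero_of_forall_dist_le hy hu hmin
  have hexpand : ‖z - u‖ ^ 2 = ‖z - y‖ ^ 2 - 2 * ⟪z - y, u - y⟫_ℝ + ‖u - y‖ ^ 2 := by
    rw [show z - u = (z - y) - (u - y) by abel, norm_sub_sq_real]
  rw [norm_sub_rev y u]
  exact le_of_pow_le_pow_left₀ two_ne_zero (norm_nonneg _) (by nlinarith [sq_nonneg ‖z - y‖])

theorem stmt_8_general {d : ℕ}
    (X : Set (EuclideanSpace ℝ (Fin d)))
    (hXv : Convex ℝ X)
    (f : EuclideanSpace ℝ (Fin d) → ℝ)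
    (hconv : ConvexOn ℝ Set.univ f)
    (hdiff : Differentiable ℝ f)
    (x y u : EuclideanSpace ℝ (Fin d)) (η : ℝ) (hη : 0 < η)
    (hu : u ∈ X)
    (hyX : y ∈ X)
    (hyproj : ∀ w ∈ X, dist y (x - η • gradient f x) ≤ dist w (x - η • gradient f x)) :
    f x - f u ≤ (η / 2) * ‖gradient f x‖ ^ 2
      + (1 / (2 * η)) * ‖x - u‖ ^ 2 - (1 / (2 * η)) * ‖y - u‖ ^ 2 := by
  set g := gradient f x
  have hgrad : f x - f u ≤ ⟪g, x - u⟫_ℝ := by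
    have := hconv.inner_gradient_le (mem_univ x) (mem_univ u) (hdiff x)
    rw [← neg_sub x u, inner_neg_right] at this
    linarith
  have hproj : ‖y - u‖ ^ 2 ≤ ‖x - η • g - u‖ ^ 2 := by
    gcongr
    exact hXv.norm_sub_le_of_forall_dist_le hyX hu hyproj
  have hexpand : ‖x - η • g - u‖ ^ 2 = ‖x - u‖ ^ 2 - 2 * η * ⟪g, x - u⟫_ℝ + η ^ 2 * ‖g‖ ^ 2 := by
    rw [sub_right_comm, norm_sub_sq_real, real_inner_smul_right, norm_smul, real_inner_comm,
      Real.norm_of_nonneg hη.le]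
    ring
  have hη2 : 0 < 2 * η := by positivity
  calc f x - f u ≤ (η ^ 2 * ‖g‖ ^ 2 + ‖x - u‖ ^ 2 - ‖y - u‖ ^ 2) / (2 * η) := by
        rw [le_div_iff₀ hη2]
        linarith [mul_le_mul_of_nonneg_left hgrad hη2.le]
    _ = (η / 2) * ‖g‖ ^ 2 + (1 / (2 * η)) * ‖x - u‖ ^ 2 - (1 / (2 * η)) * ‖y - u‖ ^ 2 := by
        field_simp

/-- Projected gradient step inequality for convex functions. -/
theorem stmt_8 {d : ℕ}
    (X : Set (EuclideanSpace ℝ (Fin d)))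
    (hXne : X.Nonempty) (hXc : IsClosed X) (hXv : Convex ℝ X)
    (f : EuclideanSpace ℝ (Fin d) → ℝ)
    (hconv : ConvexOn ℝ Set.univ f)
    (hdiff : Differentiable ℝ f)
    (x y u : EuclideanSpace ℝ (Fin d)) (η : ℝ) (hη : 0 < η)
    (hu : u ∈ X)
    (hyX : y ∈ X)
    (hyproj : ∀ w ∈ X, dist y (x - η • gradient f x) ≤ dist w (x - η • gradient f x)) :
    f x - f u ≤ (η / 2) * ‖gradient f x‖ ^ 2
      + (1 / (2 * η)) * ‖x - u‖ ^ 2 - (1 / (2 * η)) * ‖y - u‖ ^ 2 :=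
  stmt_8_general X hXv f hconv hdiff x y u η hη hu hyX hyproj
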